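/- arXiv:2306.16593 — 3 statements merged into one kernel-verified Lean document; each statement's English description precedes it below -/
import Mathlib

section
/- Let α, α' ∈ ℝ \ {0}, η, η' > 0, and θ, θ' ∈ (0, 2π) \ {π}. If 2α·η^j·cos(jθ) = 2α'·(η')^j·cos(jθ') for all j ∈ ℕ, then α = α', η = η', and θ = θ' or θ = 2π − θ'. -/
open Real

theorem stmt_1 (α α' η η' θ θ' : ℝ)
    (hα : α ≠ 0) (hα' : α' ≠ 0) (hη : 0 < η) (hη' : 0 < η')
    (hθ : θ ∈ Set.Ioo 0 (2 * π) \ {π}) (hθ' : θ' ∈ Set.Ioo 0 (2 * π) \ {π})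
    (h : ∀ j : ℕ, 2 * α * η ^ j * Real.cos (j * θ) = 2 * α' * η' ^ j * Real.cos (j * θ')) :
    α = α' ∧ η = η' ∧ (θ = θ' ∨ θ = 2 * π - θ') := by
  have h0 := h 0
  simp at h0
  have h1 := h 1
  have h2 := h 2
  simp [Nat.cast_ofNat] at h1 h2
  rw [show ((2:ℝ)) * θ = 2 * θ from rfl] at h2
  rw [Real.cos_two_mul, Real.cos_two_mul] at h2
  -- h1 : 2 * α * η * cos θ = 2 * α' * η' * cos θ'
  subst h0
  have h2α : (2*α) ≠ 0 := mul_ne_zero two_ne_zero hα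
  have hc1 : η * Real.cos θ = η' * Real.cos θ' :=
    mul_left_cancel₀ h2α (by linear_combination h1)
  have key : η ^ 2 * (2 * Real.cos θ ^ 2 - 1) = η' ^ 2 * (2 * Real.cos θ' ^ 2 - 1) :=
    mul_left_cancel₀ h2α (by linear_combination h2)
  have hc1sq : (η * Real.cos θ)^2 = (η' * Real.cos θ')^2 := by rw [hc1]
  have hsq : η ^ 2 = η' ^ 2 := by nlinarith [key, hc1sq]
  have hee : η = η' := by nlinarith [hsq, hη, hη']
  subst hee
  have hcc : Real.cos θ = Real.cos θ' := by
    have := hc1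
    nlinarith [hη]
  refine ⟨rfl, rfl, ?_⟩
  rw [Real.cos_eq_cos_iff] at hcc
  obtain ⟨k, hk | hk⟩ := hcc
  · -- θ' = 2 k π + θ
    obtain ⟨⟨h1l, h1r⟩, -⟩ := hθ
    obtain ⟨⟨h2l, h2r⟩, -⟩ := hθ'
    have hk0 : (k:ℝ) = 0 := by
      have hlt : (k:ℝ) < 1 := by nlinarith [pi_pos]
      have hgt : (-1:ℝ) < (k:ℝ) := by nlinarith [pi_pos]
      have hltz : k < 1 := by exact_mod_cast hlt
      have hgtz : -1 < k := by exact_mod_cast hgt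
      have : k = 0 := by omega
      simp [this]
    left; rw [hk0] at hk; linarith [hk]
  · -- θ' = 2 k π - θ
    obtain ⟨⟨h1l, h1r⟩, -⟩ := hθ
    obtain ⟨⟨h2l, h2r⟩, -⟩ := hθ'
    have hk1 : (k:ℝ) = 1 := by
      have hlt : (k:ℝ) < 2 := by nlinarith [pi_pos]
      have hgt : (0:ℝ) < (k:ℝ) := by nlinarith [pi_pos]
      have hltz : k < 2 := by exact_mod_cast hlt
      have hgtz : (0:ℤ) < k := by exact_mod_cast hgt
      have : k = 1 := by omega
      simp [this]
    right; rw [hk1] at hk; linarith [hk]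
end

section
/- Let α ≠ 0, η > 0, θ ∈ (0, 2π) \ {π}, and let α', β' ∈ ℝ, η₁, η₂ ∈ ℝ. Then the sequences j ↦ 2α·η^j·cos(jθ) and j ↦ α'·η₁^j − β'·η₂^j cannot agree for all j ∈ ℕ unless 2α·η^j·cos(jθ) is itself of exponential form; in particular, if cos(θ) ∉ {±1} and α ≠ 0, the two sequences differ at some j. -/
open Real

theorem stmt_3 (α η θ α' β' η₁ η₂ : ℝ)
    (hα : α ≠ 0) (hη : 0 < η) (hθ : θ ∈ Set.Ioo 0 (2 * π) \ {π})
    (hcos : Real.cos θ ≠ 1 ∧ Real.cos θ ≠ -1) :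
    ∃ j : ℕ, 2 * α * η ^ j * Real.cos (j * θ) ≠ α' * η₁ ^ j - β' * η₂ ^ j := by
  by_contra hcon
  push_neg at hcon
  set c := Real.cos θ with hc
  have hc2 : c ^ 2 < 1 := by
    have h1 := Real.neg_one_le_cos θ
    have h2 := Real.cos_le_one θ
    have hlt : c < 1 := lt_of_le_of_ne h2 hcos.1
    have hgt : -1 < c := lt_of_le_of_ne h1 (Ne.symm hcos.2)
    nlinarith
  have e0 : 2 * α = α' - β' := by
    have h := hcon 0
    simpa using h
  have e1 : 2 * α * η * c = α' * η₁ - β' * η₂ := by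
    have h := hcon 1
    push_cast at h
    simpa [hc] using h
  have e2 : 2 * α * η ^ 2 * (2 * c ^ 2 - 1) = α' * η₁ ^ 2 - β' * η₂ ^ 2 := by
    have h := hcon 2
    push_cast at h
    rw [Real.cos_two_mul] at h
    linear_combination h
  have e3 : 2 * α * η ^ 3 * (4 * c ^ 3 - 3 * c) = α' * η₁ ^ 3 - β' * η₂ ^ 3 := by
    have h := hcon 3
    push_cast at h
    rw [Real.cos_three_mul] at h
    linear_combination h
  have hAB : α' * (η₁ ^ 2 - 2 * η * c * η₁ + η ^ 2)
      = β' * (η₂ ^ 2 - 2 * η * c * η₂ + η ^ 2) := by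
    linear_combination -e2 + 2 * η * c * e1 - η ^ 2 * e0
  have hABx : α' * η₁ * (η₁ ^ 2 - 2 * η * c * η₁ + η ^ 2)
      = β' * η₂ * (η₂ ^ 2 - 2 * η * c * η₂ + η ^ 2) := by
    linear_combination -e3 + 2 * η * c * e2 - η ^ 2 * e1
  have hpos : 0 < η ^ 2 * (1 - c ^ 2) :=
    mul_pos (pow_pos hη 2) (by linarith)
  have px : 0 < η₁ ^ 2 - 2 * η * c * η₁ + η ^ 2 := by
    nlinarith [sq_nonneg (η₁ - η * c)]
  have py : 0 < η₂ ^ 2 - 2 * η * c * η₂ + η ^ 2 := by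
    nlinarith [sq_nonneg (η₂ - η * c)]
  by_cases hA0 : α' * (η₁ ^ 2 - 2 * η * c * η₁ + η ^ 2) = 0
  · have hα' : α' = 0 := by
      rcases mul_eq_zero.mp hA0 with h | h
      · exact h
      · exact absurd h px.ne'
    have hβ' : β' = 0 := by
      rcases mul_eq_zero.mp (hAB ▸ hA0 : β' * (η₂ ^ 2 - 2 * η * c * η₂ + η ^ 2) = 0) with h | h
      · exact h
      · exact absurd h py.ne'
    apply hα
    rw [hα', hβ'] at e0
    linarith
  · -- A ≠ 0, so from hAB and hABx: η₁ = η₂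
    have hxy : η₁ = η₂ := by
      have h' : α' * (η₁ ^ 2 - 2 * η * c * η₁ + η ^ 2) * (η₁ - η₂) = 0 := by
        linear_combination hABx - η₂ * hAB
      rcases mul_eq_zero.mp h' with h | h
      · exact absurd h hA0
      · linarith
    have h2α : (2 * α) ≠ 0 := by
      intro h; apply hα; linarith
    have hx : η₁ = η * c := by
      have : 2 * α * (η * c) = 2 * α * η₁ := by
        rw [hxy] at e1 ⊢
        linear_combination e1 - η₂ * e0
      have := mul_left_cancel₀ h2α this
      linarith
    have : 2 * α * (η ^ 2 * (c ^ 2 - 1)) = 0 := by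
      rw [hxy] at e2
      rw [hxy] at hx
      linear_combination e2 - η₂ ^ 2 * e0 + (2 * α * (η₂ + η * c)) * hx
    rcases mul_eq_zero.mp this with h | h
    · exact h2α h
    · nlinarith
end

section
/- Let B ∈ ℝ^{2×2} have real eigenvalues η₁ ≠ η₂, be diagonalizable as B = U⁻¹diag(η₁,η₂)U, and suppose x₁ = (z₁, z₁†)ᵀ ∈ ℝ². If the coefficients α = u₂₂(u₁₁z₁+u₁₂z₁†)/det(U) and β = u₂₁(u₂₁z₁+u₂₂z₁†)/det(U) in the representation e₁ᵀB^j x₁ = α·η₁^j − β·η₂^j are both nonzero, then the sequence (e₁ᵀB^j x₁)_{j≥0} uniquely determines the unordered pair {(α, η₁), (−β, η₂)}; consequently, any other pair (B', x₁') of the same form producing the same sequence yields the same predictions e₁ᵀ(B')^k x₁' = e₁ᵀB^k x₁ for all k ∈ ℕ. -/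
private lemma geo2 (p q r s : ℝ) (hrs : r ≠ s)
    (h : ∀ n : ℕ, p * r ^ n + q * s ^ n = 0) : p = 0 ∧ q = 0 := by
  have h0 := h 0
  have h1 := h 1
  simp at h0 h1
  have hp : p * (r - s) = 0 := by linear_combination h1 - s * h0
  have hp0 : p = 0 := by
    rcases mul_eq_zero.mp hp with h | h
    · exact h
    · exact absurd (sub_eq_zero.mp h) hrs
  constructor
  · exact hp0
  · linarith

private lemma geo3 (p q w r s t : ℝ) (hrs : r ≠ s) (hrt : r ≠ t) (hst : s ≠ t)
    (h : ∀ n : ℕ, p * r ^ n + q * s ^ n + w * t ^ n = 0) :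
    p = 0 ∧ q = 0 ∧ w = 0 := by
  have h0 := h 0
  have h1 := h 1
  have h2 := h 2
  simp at h0 h1
  have hp : p * ((r - s) * (r - t)) = 0 := by linear_combination h2 - (s + t) * h1 + s * t * h0
  have hp0 : p = 0 := by
    rcases mul_eq_zero.mp hp with h | h
    · exact h
    · rcases mul_eq_zero.mp h with h | h
      · exact absurd (sub_eq_zero.mp h) hrs
      · exact absurd (sub_eq_zero.mp h) hrt
  refine ⟨hp0, geo2 q w s t hst ?_⟩
  intro n
  have := h n
  rw [hp0] at this
  linarith

private lemma key_unique (a b c d x y u v : ℝ) (hxy : x ≠ y) (huv : u ≠ v)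
    (ha : a ≠ 0) (hb : b ≠ 0) (hc : c ≠ 0) (hd : d ≠ 0)
    (h : ∀ n : ℕ, a * x ^ n + b * y ^ n = c * u ^ n + d * v ^ n) :
    (a = c ∧ x = u ∧ b = d ∧ y = v) ∨ (a = d ∧ x = v ∧ b = c ∧ y = u) := by
  have hrec : ∀ n : ℕ, (x + y - (u + v)) * (a * x ^ (n + 1) + b * y ^ (n + 1))
      = (x * y - u * v) * (a * x ^ n + b * y ^ n) := by
    intro n
    linear_combination h (n + 2) - (u + v) * h (n + 1) + u * v * h n
  by_cases hS : x + y - (u + v) = 0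
  · by_cases hP : x * y - u * v = 0
    · -- same trace and determinant: {x,y} = {u,v}
      have hx : (x - u) * (x - v) = 0 := by linear_combination x * hS - hP
      have h0 := h 0
      have h1 := h 1
      simp at h0 h1
      rcases mul_eq_zero.mp hx with hxu0 | hxv
      · have hxu : x = u := sub_eq_zero.mp hxu0
        have hyv : y = v := by linarith
        left
        have hac : (a - c) * (x - y) = 0 := by
          subst hxu hyv
          linear_combination h1 - y * h0
        have hac0 : a = c := by
          rcases mul_eq_zero.mp hac with h | h
          · linarith [sub_eq_zero.mp h]
          · exact absurd (sub_eq_zero.mp h) hxy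
        exact ⟨hac0, hxu, by linarith, hyv⟩
      · have hxv : x = v := sub_eq_zero.mp hxv
        have hyu : y = u := by linarith
        right
        have had : (a - d) * (x - y) = 0 := by
          subst hxv hyu
          linear_combination h1 - y * h0
        have had0 : a = d := by
          rcases mul_eq_zero.mp had with h | h
          · linarith [sub_eq_zero.mp h]
          · exact absurd (sub_eq_zero.mp h) hxy
        exact ⟨had0, hxv, by linarith, hyu⟩
    · -- f ≡ 0, contradiction
      exfalso
      have hf : ∀ n : ℕ, a * x ^ n + b * y ^ n = 0 := by
        intro n
        have := hrec n
        rw [hS, zero_mul] at this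
        have := (mul_eq_zero.mp this.symm).resolve_left hP
        exact this
      exact ha (geo2 a b x y hxy hf).1
  · -- geometric: f n = f 0 * λ^n, contradiction
    exfalso
    set l : ℝ := (x * y - u * v) / (x + y - (u + v)) with hl
    have hgeo : ∀ n : ℕ, a * x ^ n + b * y ^ n = (a + b) * l ^ n := by
      intro n
      induction n with
      | zero => simp
      | succ k ih =>
        have := hrec k
        rw [ih] at this
        have hstep : a * x ^ (k + 1) + b * y ^ (k + 1)
            = (x * y - u * v) / (x + y - (u + v)) * ((a + b) * l ^ k) := by
          field_simp
          linarith [this]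
        rw [hstep, hl]
        ring
    by_cases hlx : l = x
    · have hbz : b = 0 ∧ -b = 0 := by
        apply geo2 b (-b) y x (Ne.symm hxy)
        intro n
        have := hgeo n
        rw [hlx] at this
        ring_nf
        ring_nf at this
        linarith
      exact hb hbz.1
    · by_cases hly : l = y
      · have haz : a = 0 ∧ -a = 0 := by
          apply geo2 a (-a) x y hxy
          intro n
          have := hgeo n
          rw [hly] at this
          ring_nf
          ring_nf at this
          linarith
        exact ha haz.1
      · have := geo3 a b (-(a + b)) x y l hxy (fun h => hlx h.symm) (fun h => hly h.symm)
          (fun n => by have := hgeo n; linarith)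
        exact ha this.1

theorem stmt_17
    (B U : Matrix (Fin 2) (Fin 2) ℝ) (η₁ η₂ : ℝ) (z₁ zd₁ : ℝ)
    (B' U' : Matrix (Fin 2) (Fin 2) ℝ) (η₁' η₂' : ℝ) (z₁' zd₁' : ℝ)
    (hη : η₁ ≠ η₂) (hη' : η₁' ≠ η₂')
    (hU : IsUnit U.det) (hU' : IsUnit U'.det)
    (hB : B = U⁻¹ * Matrix.diagonal ![η₁, η₂] * U)
    (hB' : B' = U'⁻¹ * Matrix.diagonal ![η₁', η₂'] * U')
    (α β α' β' : ℝ)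
    (hα : α = U 1 1 * (U 0 0 * z₁ + U 0 1 * zd₁) / U.det)
    (hβ : β = U 1 0 * (U 1 0 * z₁ + U 1 1 * zd₁) / U.det)
    (hα' : α' = U' 1 1 * (U' 0 0 * z₁' + U' 0 1 * zd₁') / U'.det)
    (hβ' : β' = U' 1 0 * (U' 1 0 * z₁' + U' 1 1 * zd₁') / U'.det)
    (hαβ : α ≠ 0 ∧ β ≠ 0) (hαβ' : α' ≠ 0 ∧ β' ≠ 0)
    (hrep : ∀ j : ℕ, (B ^ j).mulVec ![z₁, zd₁] 0 = α * η₁ ^ j - β * η₂ ^ j)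
    (hrep' : ∀ j : ℕ, (B' ^ j).mulVec ![z₁', zd₁'] 0 = α' * η₁' ^ j - β' * η₂' ^ j)
    (hseq : ∀ j : ℕ, (B ^ j).mulVec ![z₁, zd₁] 0 = (B' ^ j).mulVec ![z₁', zd₁'] 0) :
    ({(α, η₁), (-β, η₂)} : Set (ℝ × ℝ)) = {(α', η₁'), (-β', η₂')} ∧
    ∀ k : ℕ, (B' ^ k).mulVec ![z₁', zd₁'] 0 = (B ^ k).mulVec ![z₁, zd₁] 0 := by
  have hsum : ∀ n : ℕ, α * η₁ ^ n + (-β) * η₂ ^ n = α' * η₁' ^ n + (-β') * η₂' ^ n := by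
    intro n
    have := (hrep n).symm.trans ((hseq n).trans (hrep' n))
    linarith
  have hkey := key_unique α (-β) α' (-β') η₁ η₂ η₁' η₂' hη hη' hαβ.1
    (neg_ne_zero.mpr hαβ.2) hαβ'.1 (neg_ne_zero.mpr hαβ'.2) hsum
  constructor
  · rcases hkey with ⟨h1, h2, h3, h4⟩ | ⟨h1, h2, h3, h4⟩
    · rw [h1, h2, h3, h4]
    · rw [h1, h2, h3, h4]
      exact Set.pair_comm _ _
  · intro k
    exact (hseq k).symm
end
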